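/- Let D be a Q⃗4-free oriented graph, let P = p1→p2→⋯→p_ℓ be a forward-induced directed path in D, and let γ be an integer such that χ⃗(N(v)) ≤ γ for each v ∈ V(P). Then χ⃗(N(P) \ N({p1, p_ℓ})) ≤ γ. -/

import Mathlib

namespace DichiP4

variable {V : Type*}

/-- An oriented graph: an arc relation with no digons (hence also no loops). -/
def Oriented (A : V → V → Prop) : Prop := ∀ u v, A u v → ¬ A v u

/-- Adjacency in the underlying (undirected) graph. -/
def Adj (A : V → V → Prop) (u v : V) : Prop := A u v ∨ A v u

/-- The neighborhood `N(v)` of a vertex in the underlying graph. -/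
def nbr (A : V → V → Prop) (v : V) : Set V := {w | Adj A v w}

/-- `N(S)`: the neighborhood of a set of vertices. -/
def nbrSet (A : V → V → Prop) (S : Set V) : Set V := (⋃ v ∈ S, nbr A v) \ S

/-- `N[S]`: the closed neighborhood of a set of vertices. -/
def cnbrSet (A : V → V → Prop) (S : Set V) : Set V := ⋃ v ∈ S, insert v (nbr A v)

/-- A clique in the underlying graph (= the vertex set of a tournament). -/
def IsClique (A : V → V → Prop) (K : Set V) : Prop :=
  ∀ u ∈ K, ∀ v ∈ K, u ≠ v → Adj A u v

/-- The clique number `ω(D)` of the underlying graph. -/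
noncomputable def cliqueNum (A : V → V → Prop) : ℕ :=
  sSup {n | ∃ K : Set V, IsClique A K ∧ K.Finite ∧ K.ncard = n}

/-- The set `s` induces an acyclic subdigraph (no directed cycle within `s`). -/
def AcyclicOn (A : V → V → Prop) (s : Set V) : Prop :=
  ∀ v, ¬ Relation.TransGen (fun x y => x ∈ s ∧ y ∈ s ∧ A x y) v v

/-- The set `s` admits a dicoloring with `k` colors: every color class induces an
acyclic subdigraph. -/
def DicolorableOn (A : V → V → Prop) (s : Set V) (k : ℕ) : Prop :=
  ∃ c : V → ℕ, (∀ v ∈ s, c v < k) ∧ ∀ i : ℕ, AcyclicOn A {v | v ∈ s ∧ c v = i}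

/-- The dichromatic number `χ⃗(s)` of the subdigraph induced by `s`. -/
noncomputable def dichi (A : V → V → Prop) (s : Set V) : ℕ :=
  sInf {k | DicolorableOn A s k}

/-- `A` has an induced subdigraph isomorphic to `B`. -/
def HasInducedCopy {W : Type*} (A : V → V → Prop) (B : W → W → Prop) : Prop :=
  ∃ f : W → V, Function.Injective f ∧ ∀ x y : W, B x y ↔ A (f x) (f y)

/-- `A` is `B`-free: no induced subdigraph of `A` is isomorphic to `B`. -/
def Free {W : Type*} (A : V → V → Prop) (B : W → W → Prop) : Prop :=
  ¬ HasInducedCopy A B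

/-- `P⃗4`: the orientation of the path `0 – 1 – 2 – 3` with arcs `0→1, 1→2, 2→3`. -/
def P4vec : Fin 4 → Fin 4 → Prop := fun x y =>
  (x = 0 ∧ y = 1) ∨ (x = 1 ∧ y = 2) ∨ (x = 2 ∧ y = 3)

/-- `A⃗4`: the orientation of the path `0 – 1 – 2 – 3` with arcs `1→0, 1→2, 3→2`. -/
def A4vec : Fin 4 → Fin 4 → Prop := fun x y =>
  (x = 1 ∧ y = 0) ∨ (x = 1 ∧ y = 2) ∨ (x = 3 ∧ y = 2)

/-- `Q⃗4`: the orientation of the path `0 – 1 – 2 – 3` with arcs `0→1, 2→1, 3→2`. -/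
def Q4vec : Fin 4 → Fin 4 → Prop := fun x y =>
  (x = 0 ∧ y = 1) ∨ (x = 2 ∧ y = 1) ∨ (x = 3 ∧ y = 2)

/-- `Q⃗4'`: the orientation of the path `0 – 1 – 2 – 3` with arcs `1→0, 2→1, 2→3`. -/
def Q4'vec : Fin 4 → Fin 4 → Prop := fun x y =>
  (x = 1 ∧ y = 0) ∨ (x = 2 ∧ y = 1) ∨ (x = 2 ∧ y = 3)

/-- `B` is an orientation of the path on four vertices `0 – 1 – 2 – 3`. -/
def IsP4Orientation (B : Fin 4 → Fin 4 → Prop) : Prop :=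
  Oriented B ∧ ∀ x y : Fin 4, Adj B x y ↔ ((x : ℕ) + 1 = (y : ℕ) ∨ (y : ℕ) + 1 = (x : ℕ))

/-- `p 1 → p 2 → ⋯ → p ℓ` is a directed path in `A` (distinct vertices). -/
def IsDirPath (A : V → V → Prop) (ℓ : ℕ) (p : ℕ → V) : Prop :=
  1 ≤ ℓ ∧ Set.InjOn p (Set.Icc 1 ℓ) ∧ ∀ i, 1 ≤ i → i < ℓ → A (p i) (p (i + 1))

/-- A directed path `p 1 → ⋯ → p ℓ` is forward-induced: no arc `(p i, p j)` with
`j > i + 1`. -/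
def ForwardInduced (A : V → V → Prop) (ℓ : ℕ) (p : ℕ → V) : Prop :=
  ∀ i j, 1 ≤ i → j ≤ ℓ → i + 1 < j → ¬ A (p i) (p j)

/-- `p 1 → ⋯ → p ℓ` is a shortest directed path from `p 1` to `p ℓ`. -/
def IsShortestDirPath (A : V → V → Prop) (ℓ : ℕ) (p : ℕ → V) : Prop :=
  IsDirPath A ℓ p ∧
    ∀ (m : ℕ) (q : ℕ → V), IsDirPath A m q → q 1 = p 1 → q m = p ℓ → ℓ ≤ m

/-- The vertex set `V(P)` of the path `p 1, …, p ℓ`. -/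
def pathSet (ℓ : ℕ) (p : ℕ → V) : Set V := p '' Set.Icc 1 ℓ

/-- `N(P)`: the neighborhood of the vertex set of the path. -/
def pathNbrs (A : V → V → Prop) (ℓ : ℕ) (p : ℕ → V) : Set V := nbrSet A (pathSet ℓ p)

/-- `F i`: vertices of `N(P)` whose first neighbor on the path is `p i`. -/
def Fatt (A : V → V → Prop) (ℓ : ℕ) (p : ℕ → V) (i : ℕ) : Set V :=
  {v ∈ pathNbrs A ℓ p | Adj A v (p i) ∧ ∀ i', 1 ≤ i' → i' < i → ¬ Adj A v (p i')}

/-- `L j`: vertices of `N(P)` whose last neighbor on the path is `p j`. -/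
def Latt (A : V → V → Prop) (ℓ : ℕ) (p : ℕ → V) (j : ℕ) : Set V :=
  {v ∈ pathNbrs A ℓ p | Adj A v (p j) ∧ ∀ j', j < j' → j' ≤ ℓ → ¬ Adj A v (p j')}

/-- `F i ⁺`: in-neighbors of `p i` in `F i`. -/
def FattP (A : V → V → Prop) (ℓ : ℕ) (p : ℕ → V) (i : ℕ) : Set V :=
  {v ∈ Fatt A ℓ p i | A v (p i)}

/-- `F i ⁻`: out-neighbors of `p i` in `F i`. -/
def FattM (A : V → V → Prop) (ℓ : ℕ) (p : ℕ → V) (i : ℕ) : Set V :=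
  {v ∈ Fatt A ℓ p i | A (p i) v}

/-- `L j ⁺`: in-neighbors of `p j` in `L j`. -/
def LattP (A : V → V → Prop) (ℓ : ℕ) (p : ℕ → V) (j : ℕ) : Set V :=
  {v ∈ Latt A ℓ p j | A v (p j)}

/-- `L j ⁻`: out-neighbors of `p j` in `L j`. -/
def LattM (A : V → V → Prop) (ℓ : ℕ) (p : ℕ → V) (j : ℕ) : Set V :=
  {v ∈ Latt A ℓ p j | A (p j) v}

/-- `W^p = (F₂⁻ ∪ ⋯ ∪ F_{ℓ-1}⁻) ∪ (L₂⁺ ∪ ⋯ ∪ L_{ℓ-1}⁺)`. -/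
def Wp (A : V → V → Prop) (ℓ : ℕ) (p : ℕ → V) : Set V :=
  (⋃ i ∈ Set.Icc 2 (ℓ - 1), FattM A ℓ p i) ∪ ⋃ i ∈ Set.Icc 2 (ℓ - 1), LattP A ℓ p i

/-- `W^a = (F₂⁺ ∪ ⋯ ∪ F_{ℓ-1}⁺) ∪ (L₂⁻ ∪ ⋯ ∪ L_{ℓ-1}⁻)`. -/
def Wa (A : V → V → Prop) (ℓ : ℕ) (p : ℕ → V) : Set V :=
  (⋃ i ∈ Set.Icc 2 (ℓ - 1), FattP A ℓ p i) ∪ ⋃ i ∈ Set.Icc 2 (ℓ - 1), LattM A ℓ p i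

/-- `R^p = N(P) \ (N({p1, p2, pℓ}) ∪ W^p)`. -/
def Rp (A : V → V → Prop) (ℓ : ℕ) (p : ℕ → V) : Set V :=
  pathNbrs A ℓ p \ (nbrSet A {p 1, p 2, p ℓ} ∪ Wp A ℓ p)

/-- `R^a = N(P) \ (N({p1, pℓ}) ∪ W^a)`. -/
def Ra (A : V → V → Prop) (ℓ : ℕ) (p : ℕ → V) : Set V :=
  pathNbrs A ℓ p \ (nbrSet A {p 1, p ℓ} ∪ Wa A ℓ p)

/-- A dipolar set: a nonempty set `S` partitioned into `S⁺` (no out-neighbor outside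
`S`) and `S⁻` (no in-neighbor outside `S`). -/
def IsDipolar (A : V → V → Prop) (S : Set V) : Prop :=
  S.Nonempty ∧ ∃ Sp Sm : Set V, Sp ∪ Sm = S ∧ Disjoint Sp Sm ∧
    (∀ v ∈ Sp, ∀ w, w ∉ S → ¬ A v w) ∧ ∀ v ∈ Sm, ∀ w, w ∉ S → ¬ A w v

/-- Reachability by a directed path staying inside `s`. -/
def ReachIn (A : V → V → Prop) (s : Set V) (u v : V) : Prop :=
  Relation.ReflTransGen (fun x y => x ∈ s ∧ y ∈ s ∧ A x y) u v

/-- A digraph is strongly connected. -/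
def StronglyConnected (A : V → V → Prop) : Prop :=
  ∀ u v : V, Relation.ReflTransGen A u v

/-- `t` is a strongly connected component of the subdigraph induced by `s`. -/
def IsSCCOf (A : V → V → Prop) (s t : Set V) : Prop :=
  t ⊆ s ∧ t.Nonempty ∧ (∀ u ∈ t, ∀ v ∈ t, ReachIn A s u v) ∧
    ∀ u ∈ t, ∀ v ∈ s, ReachIn A s u v → ReachIn A s v u → v ∈ t

/-- A source strongly connected component: all arcs between it and the rest of `s`
begin in it. -/
def IsSourceSCC (A : V → V → Prop) (s t : Set V) : Prop :=
  IsSCCOf A s t ∧ ∀ u ∈ s, ∀ v ∈ t, A u v → u ∈ t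

/-- A sink strongly connected component: all arcs between it and the rest of `s`
end in it. -/
def IsSinkSCC (A : V → V → Prop) (s t : Set V) : Prop :=
  IsSCCOf A s t ∧ ∀ u ∈ t, ∀ v ∈ s, A u v → v ∈ t

/-- `K` (a tournament of maximum order) and the directed path `p 1 → ⋯ → p ℓ`
(from a source SCC of `D[K]` to a sink SCC of `D[K]`) form a closed tournament
`C = K ∪ V(P)`. -/
def FormsClosedTournament (A : V → V → Prop) (K : Set V) (ℓ : ℕ) (p : ℕ → V) : Prop :=
  IsClique A K ∧ K.Finite ∧ K.ncard = cliqueNum A ∧ IsDirPath A ℓ p ∧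
    (∃ t, IsSourceSCC A K t ∧ p 1 ∈ t) ∧ ∃ t, IsSinkSCC A K t ∧ p ℓ ∈ t

/-- `K` and `P` form a path-minimizing closed tournament: `|P|` is minimum among
all pairs forming a closed tournament. -/
def FormsPathMinClosedTournament (A : V → V → Prop) (K : Set V) (ℓ : ℕ) (p : ℕ → V) :
    Prop :=
  FormsClosedTournament A K ℓ p ∧
    ∀ (K' : Set V) (ℓ' : ℕ) (p' : ℕ → V), FormsClosedTournament A K' ℓ' p' → ℓ ≤ ℓ'

/-- The strong neighborhood of `S`: neighbors of `S` having both an in-neighbor and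
an out-neighbor in `S`. -/
def strongNbrs (A : V → V → Prop) (S : Set V) : Set V :=
  {v ∈ nbrSet A S | (∃ u ∈ S, A u v) ∧ ∃ u ∈ S, A v u}


/-!
Index every vertex `v` of `N(P)` by its first neighbour `p i` on the path. An arc `x → y`
inside `N(P) \ N({p 1, p ℓ})` with `y` of smaller index `i ≥ 2` would, together with the
arc `p (i-1) → p i`, induce a `Q⃗4`; so the index never decreases along arcs, every directed
cycle stays in one level `N(p i)`, and the levels can be coloured independently with the
`γ` colours available for each `N(p i)`.
-/

section Dicoloring

variable {A : V → V → Prop}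

theorem Adj.symm {u v : V} (h : Adj A u v) : Adj A v u := h.elim Or.inr Or.inl

theorem Oriented.irrefl (hA : Oriented A) (v : V) : ¬ A v v := fun h => hA v v h h

theorem mem_nbrSet_of_adj {S : Set V} {u v : V} (hu : u ∈ S) (hv : v ∉ S) (h : Adj A u v) :
    v ∈ nbrSet A S :=
  ⟨Set.mem_biUnion hu h, hv⟩

theorem AcyclicOn.of_subsingleton (hA : ∀ v, ¬ A v v) {s : Set V} (hs : s.Subsingleton) :
    AcyclicOn A s := by
  intro v h
  obtain ⟨w, ⟨hv, hw, hvw⟩, -⟩ := Relation.TransGen.head'_iff.mp h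
  exact hA v (hs hv hw ▸ hvw)

theorem DicolorableOn.mono {s : Set V} {k k' : ℕ} (h : DicolorableOn A s k) (hk : k ≤ k') :
    DicolorableOn A s k' :=
  let ⟨c, hlt, hc⟩ := h
  ⟨c, fun v hv => (hlt v hv).trans_le hk, hc⟩

theorem dicolorableOn_natCard [Finite V] (hA : ∀ v, ¬ A v v) (s : Set V) :
    DicolorableOn A s (Nat.card V) := by
  refine ⟨fun v => Finite.equivFin V v, fun v _ => (Finite.equivFin V v).isLt, fun i => ?_⟩
  refine AcyclicOn.of_subsingleton hA fun x hx y hy => (Finite.equivFin V).injective ?_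
  exact Fin.ext (hx.2.trans hy.2.symm)

theorem dicolorableOn_of_dichi_le [Finite V] (hA : Oriented A) {s : Set V} {k : ℕ}
    (h : dichi A s ≤ k) : DicolorableOn A s k :=
  DicolorableOn.mono (Nat.sInf_mem (s := {k | DicolorableOn A s k})
    ⟨_, dicolorableOn_natCard hA.irrefl s⟩) h

theorem _root_.Relation.TransGen.levelSet_of_monotone {α β : Type*} [PartialOrder β]
    {r : α → α → Prop} (f : α → β) (hf : ∀ x y, r x y → f x ≤ f y) {a : α}
    (h : Relation.TransGen r a a) :
    Relation.TransGen (fun x y => r x y ∧ f x = f a ∧ f y = f a) a a := by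
  have mono : ∀ {x y}, Relation.TransGen r x y → f x ≤ f y := fun hxy =>
    Relation.TransGen.trans_induction_on hxy (hf _ _) fun _ _ => le_trans
  suffices key : ∀ b, Relation.TransGen r a b → f b ≤ f a →
      Relation.TransGen (fun x y => r x y ∧ f x = f a ∧ f y = f a) a b from
    key a h le_rfl
  intro b hab hba
  induction hab with
  | single hr => exact .single ⟨hr, rfl, le_antisymm hba (hf _ _ hr)⟩
  | @tail m b ham hmb ih =>
    have hm : f m = f a := le_antisymm ((hf _ _ hmb).trans hba) (mono ham)
    exact .tail (ih hm.le) ⟨hmb, hm, le_antisymm hba (hm ▸ hf _ _ hmb)⟩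

theorem DicolorableOn.of_layers {s : Set V} {k : ℕ} (f : V → ℕ) (t : ℕ → Set V)
    (hf : ∀ x ∈ s, ∀ y ∈ s, A x y → f x ≤ f y) (hst : ∀ v ∈ s, v ∈ t (f v))
    (ht : ∀ i ∈ f '' s, DicolorableOn A (t i) k) : DicolorableOn A s k := by
  have hcol : ∀ i, ∃ c : V → ℕ, i ∈ f '' s →
      (∀ v ∈ t i, c v < k) ∧ ∀ j, AcyclicOn A {v | v ∈ t i ∧ c v = j} := by
    intro i
    by_cases hi : i ∈ f '' s
    · obtain ⟨c, hc⟩ := ht i hi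
      exact ⟨c, fun _ => hc⟩
    · exact ⟨0, fun h => absurd h hi⟩
  choose c hc using hcol
  refine ⟨fun v => c (f v) v, fun v hv => (hc _ ⟨v, hv, rfl⟩).1 v (hst v hv), fun j v hcyc => ?_⟩
  have hlevel := hcyc.levelSet_of_monotone f fun x y hxy => hf x hxy.1.1 y hxy.2.1.1 hxy.2.2
  obtain ⟨-, ⟨⟨hvs, -⟩, -⟩, -⟩ := Relation.TransGen.head'_iff.mp hcyc
  refine (hc (f v) ⟨v, hvs, rfl⟩).2 j v (Relation.TransGen.mono ?_ _ _ hlevel)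
  rintro x y ⟨⟨⟨hxs, hxj⟩, ⟨hys, hyj⟩, hxy⟩, hx, hy⟩
  exact ⟨⟨hx ▸ hst x hxs, hx ▸ hxj⟩, ⟨hy ▸ hst y hys, hy ▸ hyj⟩, hxy⟩

end Dicoloring

section Path

variable {A : V → V → Prop}

theorem hasInducedCopy_Q4vec (hA : Oriented A) {a b c d : V}
    (hab : A a b) (hcb : A c b) (hdc : A d c)
    (hac : ¬ Adj A a c) (had : ¬ Adj A a d) (hbd : ¬ Adj A b d)
    (nac : a ≠ c) (nad : a ≠ d) (nbd : b ≠ d) :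
    HasInducedCopy A Q4vec := by
  have nab : a ≠ b := fun h => hA.irrefl b (h ▸ hab)
  have nbc : b ≠ c := fun h => hA.irrefl b (h ▸ hcb)
  have ncd : c ≠ d := fun h => hA.irrefl c (h ▸ hdc)
  have := hA a b hab; have := hA c b hcb; have := hA d c hdc
  have := hA.irrefl a; have := hA.irrefl b; have := hA.irrefl c; have := hA.irrefl d
  simp only [Adj, not_or] at hac had hbd
  refine ⟨![a, b, c, d], fun x y h => ?_, fun x y => ?_⟩
  · fin_cases x <;> fin_cases y <;> simp_all [eq_comm]
  · fin_cases x <;> fin_cases y <;> simp_all [Q4vec]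

theorem mem_pathSet {ℓ k : ℕ} {p : ℕ → V} (h1 : 1 ≤ k) (hℓ : k ≤ ℓ) : p k ∈ pathSet ℓ p :=
  ⟨k, ⟨h1, hℓ⟩, rfl⟩

/-- `0` when `v` has no neighbour on the path. -/
noncomputable def firstNbrIdx (A : V → V → Prop) (ℓ : ℕ) (p : ℕ → V) (v : V) : ℕ :=
  sInf {k | k ∈ Set.Icc 1 ℓ ∧ v ∈ nbr A (p k)}

variable {ℓ : ℕ} {p : ℕ → V}

theorem firstNbrIdx_spec {v : V} (hv : v ∈ pathNbrs A ℓ p) :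
    firstNbrIdx A ℓ p v ∈ Set.Icc 1 ℓ ∧ v ∈ nbr A (p (firstNbrIdx A ℓ p v)) := by
  obtain ⟨w, ⟨k, hk, rfl⟩, hkv⟩ := Set.mem_iUnion₂.mp hv.1
  exact Nat.sInf_mem (s := {k | k ∈ Set.Icc 1 ℓ ∧ v ∈ nbr A (p k)}) ⟨k, hk, hkv⟩

theorem notMem_nbr_of_lt_firstNbrIdx {v : V} {k : ℕ} (hk : k ∈ Set.Icc 1 ℓ)
    (hlt : k < firstNbrIdx A ℓ p v) : v ∉ nbr A (p k) :=
  fun hkv => Nat.notMem_of_lt_sInf hlt ⟨hk, hkv⟩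

theorem firstNbrIdx_le_of_arc (hA : Oriented A) (hfree : Free A Q4vec) (hp : IsDirPath A ℓ p)
    {x y : V} (hx : x ∈ pathNbrs A ℓ p) (hy : y ∈ pathNbrs A ℓ p) (hy1 : y ∉ nbr A (p 1))
    (hxy : A x y) : firstNbrIdx A ℓ p x ≤ firstNbrIdx A ℓ p y := by
  by_contra! hlt
  obtain ⟨⟨hi1, hiℓ⟩, hyi⟩ := firstNbrIdx_spec hy
  set i := firstNbrIdx A ℓ p y
  have hi2 : 2 ≤ i := by
    by_contra! h
    exact hy1 (by rwa [show i = 1 by omega] at hyi)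
  have hprev : A (p (i - 1)) (p i) := by
    simpa [Nat.sub_add_cancel (by omega : 1 ≤ i)] using hp.2.2 (i - 1) (by omega) (by omega)
  have hyprev : ¬ Adj A (p (i - 1)) y :=
    notMem_nbr_of_lt_firstNbrIdx (ℓ := ℓ) (v := y) ⟨by omega, by omega⟩ (by omega)
  have hxi : ¬ Adj A (p i) x := notMem_nbr_of_lt_firstNbrIdx ⟨hi1, hiℓ⟩ hlt
  have hxprev : ¬ Adj A (p (i - 1)) x :=
    notMem_nbr_of_lt_firstNbrIdx (ℓ := ℓ) (v := x) ⟨by omega, by omega⟩ (by omega)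
  have off_path : ∀ {v}, v ∈ pathNbrs A ℓ p → ∀ k, 1 ≤ k → k ≤ ℓ → v ≠ p k :=
    fun hv k h1 h2 h => hv.2 (h ▸ mem_pathSet h1 h2)
  apply hfree
  rcases hyi with hiy | hyi
  · -- `x → y ← p i ← p (i - 1)`
    exact hasInducedCopy_Q4vec hA hxy hiy hprev (fun h => hxi h.symm) (fun h => hxprev h.symm)
      (fun h => hyprev h.symm) (off_path hx i hi1 hiℓ) (off_path hx _ (by omega) (by omega))
      (off_path hy _ (by omega) (by omega))
  · -- `p (i - 1) → p i ← y ← x`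
    exact hasInducedCopy_Q4vec hA hprev hyi hxy hyprev hxprev hxi
      (off_path hy _ (by omega) (by omega)).symm (off_path hx _ (by omega) (by omega)).symm
      (off_path hx i hi1 hiℓ).symm

end Path

theorem Q4free_pathNbrs_dichi_general {V : Type*} [Fintype V]
    (A : V → V → Prop) (hA : Oriented A) (hfree : Free A Q4vec)
    (ℓ : ℕ) (p : ℕ → V) (hp : IsDirPath A ℓ p)
    (γ : ℕ) (hγ : ∀ i, 1 ≤ i → i ≤ ℓ → dichi A (nbr A (p i)) ≤ γ) :
    dichi A (pathNbrs A ℓ p \ nbrSet A {p 1, p ℓ}) ≤ γ := by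
  set S := pathNbrs A ℓ p \ nbrSet A {p 1, p ℓ}
  have hS : ∀ v ∈ S, v ∈ pathNbrs A ℓ p ∧ v ∉ nbr A (p 1) := by
    refine fun v hv => ⟨hv.1, fun h1v => hv.2 (mem_nbrSet_of_adj (by simp) ?_ h1v)⟩
    rintro (rfl | rfl)
    exacts [hv.1.2 (mem_pathSet le_rfl hp.1), hv.1.2 (mem_pathSet hp.1 le_rfl)]
  refine Nat.sInf_le (DicolorableOn.of_layers (firstNbrIdx A ℓ p) (fun i => nbr A (p i))
    (fun x hx y hy => firstNbrIdx_le_of_arc hA hfree hp (hS x hx).1 (hS y hy).1 (hS y hy).2)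
    (fun v hv => (firstNbrIdx_spec (hS v hv).1).2) ?_)
  rintro _ ⟨v, hv, rfl⟩
  obtain ⟨⟨h1, hℓ⟩, -⟩ := firstNbrIdx_spec (hS v hv).1
  exact dicolorableOn_of_dichi_le hA (hγ _ h1 hℓ)

/-- in a `Q⃗4`-free oriented graph, for a forward-induced directed
path `P = p 1 → ⋯ → p ℓ` with `χ⃗(N(v)) ≤ γ` for each `v ∈ V(P)`,
`χ⃗(N(P) \ N({p 1, p ℓ})) ≤ γ`. -/
theorem Q4free_pathNbrs_dichi {V : Type*} [Fintype V]
    (A : V → V → Prop) (hA : Oriented A) (hfree : Free A Q4vec)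
    (ℓ : ℕ) (p : ℕ → V) (hp : IsDirPath A ℓ p) (hfi : ForwardInduced A ℓ p)
    (γ : ℕ) (hγ : ∀ i, 1 ≤ i → i ≤ ℓ → dichi A (nbr A (p i)) ≤ γ) :
    dichi A (pathNbrs A ℓ p \ nbrSet A {p 1, p ℓ}) ≤ γ :=
  Q4free_pathNbrs_dichi_general A hA hfree ℓ p hp γ hγ

end DichiP4
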